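/- arXiv:1507.07326 — 3 statements merged into one kernel-verified Lean document; each statement's English description precedes it below -/
import Mathlib

section
/- For k ∈ (0,1), α ≠ 0, and æ > 0 with 16æ⁴k²(1-k²) = α² (equivalently æ = (√(E²+α²)/2)^{1/2} with k² = 1/2 + E/(4æ²)), the function f_y(p) = -16æ⁴k⁴ cn³p dn p sn p + (16æ⁴k² E(p) - α²p)(dn²p - k² cn²p sn²p) is strictly positive for all p ∈ (0, K(k)), where sn, cn, dn are Jacobi elliptic functions with modulus k, E(p) = ∫₀ᵖ dn²t dt, and K(k) is the complete elliptic integral of the first kind. -/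
/-!
Put `B = dn² - k² cn² sn²`; from `sn² + cn² = 1` and `dn² = 1 - k² sn²` one gets
`B = k² cn⁴ + 1 - k² > 0`. Since `α² = 16 æ⁴ k² (1 - k²)`, we have `f_y = 16 æ⁴ k² · B · G`
with `G(p) = E(p) - (1 - k²) p - k² sn p cn³ p dn p / B`. Now `G(0) = 0` and
`G' = 4 k² (1 - k²) (sn cn dn)² / B²` is nonnegative everywhere and positive just to the right
of `0`, where `sn` and `cn` are positive. Hence `G > 0` on `(0, ∞)`, which contains `(0, K)`.
-/

open Filter Topology Set

theorem lt_of_hasDerivAt_nonneg_of_eventually_pos {G G' : ℝ → ℝ} {a p : ℝ}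
    (hG : ∀ x, HasDerivAt G (G' x) x) (hG'_nonneg : ∀ x, 0 ≤ G' x)
    (hG'_pos : ∀ᶠ x in 𝓝[>] a, 0 < G' x) (hap : a < p) : G a < G p := by
  obtain ⟨u, hau, hu⟩ := mem_nhdsGT_iff_exists_Ioo_subset.mp hG'_pos
  have hdiff : Differentiable ℝ G := fun x ↦ (hG x).differentiableAt
  set q := min p u
  have haq : a < q := lt_min hap hau
  have hstrict : StrictMonoOn G (Icc a q) := by
    refine strictMonoOn_of_deriv_pos (convex_Icc a q) hdiff.continuous.continuousOn fun x hx ↦ ?_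
    rw [interior_Icc] at hx
    rw [(hG x).deriv]
    exact hu ⟨hx.1, hx.2.trans_le (min_le_right p u)⟩
  have hmono : Monotone G :=
    monotone_of_deriv_nonneg hdiff fun x ↦ (hG x).deriv ▸ hG'_nonneg x
  calc G a < G q := hstrict (left_mem_Icc.mpr haq.le) (right_mem_Icc.mpr haq.le) haq
    _ ≤ G p := hmono (min_le_left p u)

structure IsJacobiElliptic (k : ℝ) (sn cn dn : ℝ → ℝ) : Prop where
  sn_zero : sn 0 = 0
  cn_zero : cn 0 = 1
  dn_zero : dn 0 = 1
  hasDerivAt_sn : ∀ t, HasDerivAt sn (cn t * dn t) t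
  hasDerivAt_cn : ∀ t, HasDerivAt cn (-(sn t * dn t)) t
  hasDerivAt_dn : ∀ t, HasDerivAt dn (-(k ^ 2 * sn t * cn t)) t

noncomputable def fyReduced (k : ℝ) (sn cn dn E : ℝ → ℝ) (t : ℝ) : ℝ :=
  E t - (1 - k ^ 2) * t
    - k ^ 2 * (sn t * cn t ^ 3 * dn t) / (dn t ^ 2 - k ^ 2 * cn t ^ 2 * sn t ^ 2)

namespace IsJacobiElliptic

variable {k : ℝ} {sn cn dn E : ℝ → ℝ}

theorem sn_sq_add_cn_sq (h : IsJacobiElliptic k sn cn dn) (t : ℝ) :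
    sn t ^ 2 + cn t ^ 2 = 1 := by
  have hderiv : ∀ x, HasDerivAt (fun t ↦ sn t ^ 2 + cn t ^ 2) 0 x := fun x ↦
    (((h.hasDerivAt_sn x).fun_pow 2).fun_add ((h.hasDerivAt_cn x).fun_pow 2)).congr_deriv
      (by ring)
  simpa [h.sn_zero, h.cn_zero] using is_const_of_deriv_eq_zero
    (fun x ↦ (hderiv x).differentiableAt) (fun x ↦ (hderiv x).deriv) t 0

theorem dn_sq (h : IsJacobiElliptic k sn cn dn) (t : ℝ) :
    dn t ^ 2 = 1 - k ^ 2 * sn t ^ 2 := by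
  have hderiv : ∀ x, HasDerivAt (fun t ↦ dn t ^ 2 + k ^ 2 * sn t ^ 2) 0 x := fun x ↦
    (((h.hasDerivAt_dn x).fun_pow 2).fun_add
      (((h.hasDerivAt_sn x).fun_pow 2).const_mul (k ^ 2))).congr_deriv (by ring)
  have hconst := is_const_of_deriv_eq_zero
    (fun x ↦ (hderiv x).differentiableAt) (fun x ↦ (hderiv x).deriv) t 0
  simp only [h.sn_zero, h.dn_zero] at hconst
  linarith

theorem dn_ne_zero (h : IsJacobiElliptic k sn cn dn) (hk : k ^ 2 < 1) (t : ℝ) : dn t ≠ 0 := by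
  have hdn : 0 < dn t ^ 2 := by
    nlinarith [h.dn_sq t, h.sn_sq_add_cn_sq t, mul_nonneg (sq_nonneg k) (sq_nonneg (cn t))]
  exact fun h0 ↦ by simp [h0] at hdn

theorem denom_pos (h : IsJacobiElliptic k sn cn dn) (hk : k ^ 2 < 1) (t : ℝ) :
    0 < dn t ^ 2 - k ^ 2 * cn t ^ 2 * sn t ^ 2 := by
  have hB : dn t ^ 2 - k ^ 2 * cn t ^ 2 * sn t ^ 2 = k ^ 2 * cn t ^ 4 + (1 - k ^ 2) := by
    linear_combination h.dn_sq t - k ^ 2 * (cn t ^ 2 + 1) * h.sn_sq_add_cn_sq t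
  rw [hB]
  positivity

theorem eventually_sn_pos (h : IsJacobiElliptic k sn cn dn) : ∀ᶠ t in 𝓝[>] 0, 0 < sn t := by
  have hsn' : HasDerivAt sn 1 0 := by
    simpa [h.cn_zero, h.dn_zero] using h.hasDerivAt_sn 0
  have hslope : ∀ᶠ t in 𝓝[≠] 0, 0 < slope sn 0 t :=
    (hasDerivAt_iff_tendsto_slope.mp hsn').eventually (eventually_gt_nhds one_pos)
  filter_upwards [nhdsGT_le_nhdsNE 0 hslope, self_mem_nhdsWithin] with t ht ht0
  exact pos_of_slope_pos ht0 ht h.sn_zero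

theorem eventually_cn_pos (h : IsJacobiElliptic k sn cn dn) : ∀ᶠ t in 𝓝 0, 0 < cn t :=
  continuousAt_const.eventually_lt (h.hasDerivAt_cn 0).continuousAt (by simp [h.cn_zero])

theorem hasDerivAt_fyReduced (h : IsJacobiElliptic k sn cn dn) (hk : k ^ 2 < 1)
    (hE : ∀ t, HasDerivAt E (dn t ^ 2) t) (t : ℝ) :
    HasDerivAt (fyReduced k sn cn dn E)
      (4 * k ^ 2 * (1 - k ^ 2) * (sn t * cn t * dn t) ^ 2 /
        (dn t ^ 2 - k ^ 2 * cn t ^ 2 * sn t ^ 2) ^ 2) t := by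
  have hs := h.sn_sq_add_cn_sq t
  have hd := h.dn_sq t
  have hB := h.denom_pos hk t
  have hnum : HasDerivAt (fun t ↦ k ^ 2 * (sn t * cn t ^ 3 * dn t))
      (k ^ 2 * (cn t ^ 4 * dn t ^ 2 - 3 * sn t ^ 2 * cn t ^ 2 * dn t ^ 2
        - k ^ 2 * sn t ^ 2 * cn t ^ 4)) t :=
    ((((h.hasDerivAt_sn t).fun_mul ((h.hasDerivAt_cn t).fun_pow 3)).fun_mul
      (h.hasDerivAt_dn t)).const_mul (k ^ 2)).congr_deriv (by ring)
  have hden : HasDerivAt (fun t ↦ dn t ^ 2 - k ^ 2 * cn t ^ 2 * sn t ^ 2)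
      (-(4 * k ^ 2 * sn t * cn t ^ 3 * dn t)) t :=
    (((h.hasDerivAt_dn t).fun_pow 2).fun_sub
      ((((h.hasDerivAt_cn t).fun_pow 2).const_mul (k ^ 2)).fun_mul
        ((h.hasDerivAt_sn t).fun_pow 2))).congr_deriv
      (by linear_combination 2 * k ^ 2 * sn t * cn t * dn t * hs)
  have hlin : HasDerivAt (fun t ↦ E t - (1 - k ^ 2) * t) (dn t ^ 2 - (1 - k ^ 2)) t :=
    ((hE t).fun_sub ((hasDerivAt_id t).const_mul (1 - k ^ 2))).congr_deriv (by ring)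
  refine (hlin.fun_sub (hnum.fun_div hden hB.ne')).congr_deriv ?_
  -- both sides are polynomials in `cn², dn²`, which the Jacobi identities express through `sn²`
  have key : ∀ C D : ℝ, C = 1 - sn t ^ 2 → D = 1 - k ^ 2 * sn t ^ 2 →
      (D - (1 - k ^ 2)) * (D - k ^ 2 * C * sn t ^ 2) ^ 2 - k ^ 2 * C *
        ((D * (C - 3 * sn t ^ 2) - k ^ 2 * C * sn t ^ 2) * (D - k ^ 2 * C * sn t ^ 2)
          + 4 * D * k ^ 2 * C ^ 2 * sn t ^ 2) =
      4 * D * k ^ 2 * (1 - k ^ 2) * C * sn t ^ 2 := by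
    rintro C D rfl rfl
    ring
  field_simp
  linear_combination key (cn t ^ 2) (dn t ^ 2) (by linarith) hd

theorem fyReduced_pos (h : IsJacobiElliptic k sn cn dn) (hk0 : k ≠ 0) (hk : k ^ 2 < 1)
    (hE : ∀ t, HasDerivAt E (dn t ^ 2) t) (hE0 : E 0 = 0) {p : ℝ} (hp : 0 < p) :
    0 < fyReduced k sn cn dn E p := by
  have hG0 : fyReduced k sn cn dn E 0 = 0 := by simp [fyReduced, hE0, h.sn_zero]
  have hk' : 0 < 1 - k ^ 2 := by linarith
  rw [← hG0]
  refine lt_of_hasDerivAt_nonneg_of_eventually_pos (h.hasDerivAt_fyReduced hk hE)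
    (fun x ↦ by positivity) ?_ hp
  filter_upwards [h.eventually_sn_pos, nhdsWithin_le_nhds h.eventually_cn_pos] with x hsn hcn
  have hdn := h.dn_ne_zero hk x
  have hB := h.denom_pos hk x
  positivity

end IsJacobiElliptic

theorem fy_eq_mul_fyReduced {k ae α p : ℝ} {sn cn dn E : ℝ → ℝ}
    (hB : dn p ^ 2 - k ^ 2 * cn p ^ 2 * sn p ^ 2 ≠ 0)
    (hrel : 16 * ae ^ 4 * k ^ 2 * (1 - k ^ 2) = α ^ 2) :
    -16 * ae ^ 4 * k ^ 4 * cn p ^ 3 * dn p * sn p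
        + (16 * ae ^ 4 * k ^ 2 * E p - α ^ 2 * p) * (dn p ^ 2 - k ^ 2 * cn p ^ 2 * sn p ^ 2)
      = 16 * ae ^ 4 * k ^ 2 *
          ((dn p ^ 2 - k ^ 2 * cn p ^ 2 * sn p ^ 2) * fyReduced k sn cn dn E p) := by
  rw [fyReduced]
  field_simp
  linear_combination (p * (dn p ^ 2 - k ^ 2 * cn p ^ 2 * sn p ^ 2)) * hrel

theorem fy_pos_general
    (k : ℝ) (hk : k ∈ Set.Ioo (0:ℝ) 1)
    (sn cn dn : ℝ → ℝ)
    (hsn0 : sn 0 = 0) (hcn0 : cn 0 = 1) (hdn0 : dn 0 = 1)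
    (hsn : ∀ t, HasDerivAt sn (cn t * dn t) t)
    (hcn : ∀ t, HasDerivAt cn (-(sn t * dn t)) t)
    (hdn : ∀ t, HasDerivAt dn (-(k ^ 2 * sn t * cn t)) t)
    (K : ℝ)
    (E : ℝ → ℝ) (hE : ∀ p, E p = ∫ t in (0:ℝ)..p, dn t ^ 2)
    (α ae : ℝ) (hae : 0 < ae)
    (hrel : 16 * ae ^ 4 * k ^ 2 * (1 - k ^ 2) = α ^ 2) :
    ∀ p ∈ Set.Ioo 0 K,
      0 < -16 * ae ^ 4 * k ^ 4 * cn p ^ 3 * dn p * sn p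
          + (16 * ae ^ 4 * k ^ 2 * E p - α ^ 2 * p)
            * (dn p ^ 2 - k ^ 2 * cn p ^ 2 * sn p ^ 2) := by
  rintro p ⟨hp, -⟩
  have h : IsJacobiElliptic k sn cn dn := ⟨hsn0, hcn0, hdn0, hsn, hcn, hdn⟩
  have hk2 : k ^ 2 < 1 := by nlinarith [hk.1, hk.2]
  have hE' : ∀ t, HasDerivAt E (dn t ^ 2) t := by
    rw [show E = fun p ↦ ∫ t in (0:ℝ)..p, dn t ^ 2 from funext hE]
    have hdn_cont : Continuous dn := continuous_iff_continuousAt.2 fun t ↦ (hdn t).continuousAt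
    exact fun t ↦ ((hdn_cont.pow 2).integral_hasStrictDerivAt 0 t).hasDerivAt
  have hE0 : E 0 = 0 := by rw [hE, intervalIntegral.integral_same]
  have hB := h.denom_pos hk2 p
  rw [fy_eq_mul_fyReduced hB.ne' hrel]
  have hk0 := hk.1
  exact mul_pos (by positivity) (mul_pos hB (h.fyReduced_pos hk0.ne' hk2 hE' hE0 hp))

/-- Positivity of `f_y` on `(0, K(k))` (timelike Maxwell-set analysis).
The Jacobi elliptic functions are characterized by their defining ODE system. -/
theorem fy_pos
    (k : ℝ) (hk : k ∈ Set.Ioo (0:ℝ) 1)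
    (sn cn dn : ℝ → ℝ)
    (hsn0 : sn 0 = 0) (hcn0 : cn 0 = 1) (hdn0 : dn 0 = 1)
    (hsn : ∀ t, HasDerivAt sn (cn t * dn t) t)
    (hcn : ∀ t, HasDerivAt cn (-(sn t * dn t)) t)
    (hdn : ∀ t, HasDerivAt dn (-(k ^ 2 * sn t * cn t)) t)
    (K : ℝ)
    (hK : K = ∫ t in (0:ℝ)..(Real.pi / 2), 1 / Real.sqrt (1 - k ^ 2 * Real.sin t ^ 2))
    (E : ℝ → ℝ) (hE : ∀ p, E p = ∫ t in (0:ℝ)..p, dn t ^ 2)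
    (α ae : ℝ) (hα : α ≠ 0) (hae : 0 < ae)
    (hrel : 16 * ae ^ 4 * k ^ 2 * (1 - k ^ 2) = α ^ 2) :
    ∀ p ∈ Set.Ioo 0 K,
      0 < -16 * ae ^ 4 * k ^ 4 * cn p ^ 3 * dn p * sn p
          + (16 * ae ^ 4 * k ^ 2 * E p - α ^ 2 * p)
            * (dn p ^ 2 - k ^ 2 * cn p ^ 2 * sn p ^ 2) :=
  fy_pos_general k hk sn cn dn hsn0 hcn0 hdn0 hsn hcn hdn K E hE α ae hae hrel
end

section
/- (Symmetry ε² of timelike trajectories) Let θ : [0,T] → ℝ be continuous and let (x₁,x₂,y,z) solve ẋ₁ = -cosh θ, ẋ₂ = sinh θ, ẏ = (x₂ cosh θ + x₁ sinh θ)/2, ż = ((x₁²+x₂²)/2) sinh θ with zero initial conditions. Let θ²(t) = θ(T-t) and let (x₁²,x₂²,y²,z²) solve the same system with -cosh θ² and sinh θ² (and with ẏ² = (x₂² cosh θ² + x₁² sinh θ²)/2, ż² = ((x₁²)²+(x₂²)²)/2 · sinh θ²) and zero initial conditions. Then x₁²(T) = x₁(T), x₂²(T) = x₂(T), y²(T)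 = -y(T), and z²(T) = z(T) - x₁(T)y(T). -/
private lemma agree_on_Icc (T : ℝ) (f g f' : ℝ → ℝ)
    (hf : ∀ t ∈ Set.Icc 0 T, HasDerivAt f (f' t) t)
    (hg : ∀ t ∈ Set.Icc 0 T, HasDerivAt g (f' t) t)
    (h0 : f 0 = g 0) : ∀ t ∈ Set.Icc 0 T, f t = g t :=
  eq_of_has_deriv_right_eq
    (fun x hx => (hf x (Set.Ico_subset_Icc_self hx)).hasDerivWithinAt)
    (fun x hx => (hg x (Set.Ico_subset_Icc_self hx)).hasDerivWithinAt)
    (fun x hx => (hf x hx).continuousAt.continuousWithinAt)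
    (fun x hx => (hg x hx).continuousAt.continuousWithinAt)
    h0

/-- Symmetry `ε²` acting on timelike trajectories: the endpoint of the reflected
trajectory is `(x₁(T), x₂(T), -y(T), z(T) - x₁(T) y(T))`. -/
theorem eps2_timelike_endpoints
    (T : ℝ) (hT : 0 < T) (θ : ℝ → ℝ) (hθ : ContinuousOn θ (Set.Icc 0 T))
    (x₁ x₂ y z x₁' x₂' y' z' : ℝ → ℝ)
    (h0 : x₁ 0 = 0 ∧ x₂ 0 = 0 ∧ y 0 = 0 ∧ z 0 = 0)
    (h0' : x₁' 0 = 0 ∧ x₂' 0 = 0 ∧ y' 0 = 0 ∧ z' 0 = 0)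
    (hx₁ : ∀ t ∈ Set.Icc 0 T, HasDerivAt x₁ (-Real.cosh (θ t)) t)
    (hx₂ : ∀ t ∈ Set.Icc 0 T, HasDerivAt x₂ (Real.sinh (θ t)) t)
    (hy : ∀ t ∈ Set.Icc 0 T,
      HasDerivAt y ((x₂ t * Real.cosh (θ t) + x₁ t * Real.sinh (θ t)) / 2) t)
    (hz : ∀ t ∈ Set.Icc 0 T,
      HasDerivAt z ((x₁ t ^ 2 + x₂ t ^ 2) / 2 * Real.sinh (θ t)) t)
    (hx₁' : ∀ t ∈ Set.Icc 0 T, HasDerivAt x₁' (-Real.cosh (θ (T - t))) t)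
    (hx₂' : ∀ t ∈ Set.Icc 0 T, HasDerivAt x₂' (Real.sinh (θ (T - t))) t)
    (hy' : ∀ t ∈ Set.Icc 0 T,
      HasDerivAt y' ((x₂' t * Real.cosh (θ (T - t)) + x₁' t * Real.sinh (θ (T - t))) / 2) t)
    (hz' : ∀ t ∈ Set.Icc 0 T,
      HasDerivAt z' ((x₁' t ^ 2 + x₂' t ^ 2) / 2 * Real.sinh (θ (T - t))) t) :
    x₁' T = x₁ T ∧ x₂' T = x₂ T ∧ y' T = -y T ∧ z' T = z T - x₁ T * y T := by
  obtain ⟨h01, h02, h0y, h0z⟩ := h0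
  obtain ⟨h01', h02', h0y', h0z'⟩ := h0'
  have hTT : T ∈ Set.Icc (0:ℝ) T := ⟨le_of_lt hT, le_refl T⟩
  have hs : ∀ t ∈ Set.Icc (0:ℝ) T, T - t ∈ Set.Icc (0:ℝ) T := by
    intro t ht; obtain ⟨h1, h2⟩ := ht; constructor <;> linarith
  have hneg : ∀ t : ℝ, HasDerivAt (fun s => T - s) (-1) t := by
    intro t
    simpa using (hasDerivAt_id t).const_sub T
  -- composed derivatives
  have hx1c : ∀ t ∈ Set.Icc (0:ℝ) T,
      HasDerivAt (fun s => x₁ (T - s)) (Real.cosh (θ (T - t))) t := by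
    intro t ht
    have := (hx₁ (T - t) (hs t ht)).comp t (hneg t)
    simpa [Function.comp_def] using this
  have hx2c : ∀ t ∈ Set.Icc (0:ℝ) T,
      HasDerivAt (fun s => x₂ (T - s)) (-Real.sinh (θ (T - t))) t := by
    intro t ht
    have := (hx₂ (T - t) (hs t ht)).comp t (hneg t)
    simpa [Function.comp_def] using this
  have hyc : ∀ t ∈ Set.Icc (0:ℝ) T,
      HasDerivAt (fun s => y (T - s))
        (-((x₂ (T - t) * Real.cosh (θ (T - t)) + x₁ (T - t) * Real.sinh (θ (T - t))) / 2)) t := by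
    intro t ht
    have := (hy (T - t) (hs t ht)).comp t (hneg t)
    simpa [Function.comp_def] using this
  have hzc : ∀ t ∈ Set.Icc (0:ℝ) T,
      HasDerivAt (fun s => z (T - s))
        (-((x₁ (T - t) ^ 2 + x₂ (T - t) ^ 2) / 2 * Real.sinh (θ (T - t)))) t := by
    intro t ht
    have := (hz (T - t) (hs t ht)).comp t (hneg t)
    simpa [Function.comp_def] using this
  -- x₁' t = x₁ T - x₁ (T - t)
  have hA : ∀ t ∈ Set.Icc (0:ℝ) T, x₁' t = x₁ T - x₁ (T - t) := by
    apply agree_on_Icc T x₁' (fun t => x₁ T - x₁ (T - t))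
      (fun t => -Real.cosh (θ (T - t))) hx₁'
    · intro t ht
      have := (hx1c t ht).const_sub (x₁ T)
      simpa using this
    · simp [h01', sub_self]
  have hB : ∀ t ∈ Set.Icc (0:ℝ) T, x₂' t = x₂ T - x₂ (T - t) := by
    apply agree_on_Icc T x₂' (fun t => x₂ T - x₂ (T - t))
      (fun t => Real.sinh (θ (T - t))) hx₂'
    · intro t ht
      have := (hx2c t ht).const_sub (x₂ T)
      simpa using this
    · simp [h02', sub_self]
  -- y' t = y (T-t) + (x₂ T / 2) x₁(T-t) - (x₁ T / 2) x₂(T-t) - y T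
  have hC : ∀ t ∈ Set.Icc (0:ℝ) T,
      y' t = y (T - t) + x₂ T / 2 * x₁ (T - t) - x₁ T / 2 * x₂ (T - t) - y T := by
    apply agree_on_Icc T y' _
      (fun t => ((x₂ T - x₂ (T - t)) * Real.cosh (θ (T - t))
        + (x₁ T - x₁ (T - t)) * Real.sinh (θ (T - t))) / 2)
    · intro t ht
      have h := hy' t ht
      rw [hA t ht, hB t ht] at h
      exact h
    · intro t ht
      have h := (((hyc t ht).add ((hx1c t ht).const_mul (x₂ T / 2))).sub
        ((hx2c t ht).const_mul (x₁ T / 2))).sub_const (y T)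
      exact h.congr_deriv (by ring)
    · simp [h0y', sub_self]
      ring
  -- z' t = -z(T-t) - ((x₁T)²+(x₂T)²)/2 * x₂(T-t) + x₁T * y(T-t)
  --        + x₁T/2 * x₁(T-t)x₂(T-t) + x₂T/2 * x₂(T-t)² + (z T - x₁T * y T)
  have hD : ∀ t ∈ Set.Icc (0:ℝ) T,
      z' t = -z (T - t) - (x₁ T ^ 2 + x₂ T ^ 2) / 2 * x₂ (T - t) + x₁ T * y (T - t)
        + x₁ T / 2 * (x₁ (T - t) * x₂ (T - t)) + x₂ T / 2 * x₂ (T - t) ^ 2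
        + (z T - x₁ T * y T) := by
    apply agree_on_Icc T z' _
      (fun t => ((x₁ T - x₁ (T - t)) ^ 2 + (x₂ T - x₂ (T - t)) ^ 2) / 2
        * Real.sinh (θ (T - t)))
    · intro t ht
      have h := hz' t ht
      rw [hA t ht, hB t ht] at h
      exact h
    · intro t ht
      have h := ((((((hzc t ht).neg).sub
        ((hx2c t ht).const_mul ((x₁ T ^ 2 + x₂ T ^ 2) / 2))).add
        ((hyc t ht).const_mul (x₁ T))).add
        (((hx1c t ht).mul (hx2c t ht)).const_mul (x₁ T / 2))).add
        (((hx2c t ht).pow 2).const_mul (x₂ T / 2))).add_const (z T - x₁ T * y T)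
      exact h.congr_deriv (by push_cast; ring)
    · simp [h0z', sub_self]
      ring
  have e1 := hA T hTT
  have e2 := hB T hTT
  have e3 := hC T hTT
  have e4 := hD T hTT
  simp only [sub_self, h01, h02, h0y, h0z] at e1 e2 e3 e4
  refine ⟨by linarith, by linarith, by linarith, by linarith⟩
end

section
/- (Symmetry ε¹ of spacelike trajectories) Let θ : [0,T] → ℝ be continuous and let (x₁,x₂,y,z) solve ẋ₁ = -sinh θ, ẋ₂ = cosh θ, ẏ = (x₂ sinh θ + x₁ cosh θ)/2, ż = ((x₁²+x₂²)/2) cosh θ with zero initial conditions. Let θ¹(t) = θ(T-t), and let (x₁¹,x₂¹,y¹,z¹) solve the analogous system for θ¹ with zero initial conditions. Then x₁¹(T) = x₁(T), x₂¹(T) = x₂(T), y¹(T) = -y(T), and z¹(T) = z(T) - x₁(T)y(T). -/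
private lemma aux_const {T : ℝ} {F : ℝ → ℝ}
    (hF : ∀ t ∈ Set.Icc 0 T, HasDerivAt F 0 t) :
    ∀ t ∈ Set.Icc 0 T, F t = F 0 := by
  intro t ht
  exact constant_of_has_deriv_right_zero
    (fun s hs => (hF s hs).continuousAt.continuousWithinAt)
    (fun s hs => (hF s (Set.mem_Icc_of_Ico hs)).hasDerivWithinAt) t ht

private lemma aux_refl {T : ℝ} {w d : ℝ → ℝ}
    (hw : ∀ s ∈ Set.Icc 0 T, HasDerivAt w (d s) s) :
    ∀ t ∈ Set.Icc 0 T, HasDerivAt (fun t => w (T - t)) (-(d (T - t))) t := by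
  intro t ht
  have hmem : T - t ∈ Set.Icc 0 T := ⟨by linarith [ht.2], by linarith [ht.1]⟩
  have h := (hw (T - t) hmem).comp t ((hasDerivAt_id t).const_sub T)
  simpa [Function.comp_def, mul_comm] using h

/-- Symmetry `ε¹` acting on spacelike trajectories: the endpoint of the reflected
trajectory is `(x₁(T), x₂(T), -y(T), z(T) - x₁(T) y(T))`. -/
theorem eps1_spacelike_endpoints
    (T : ℝ) (hT : 0 < T) (θ : ℝ → ℝ) (hθ : ContinuousOn θ (Set.Icc 0 T))
    (x₁ x₂ y z x₁' x₂' y' z' : ℝ → ℝ)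
    (h0 : x₁ 0 = 0 ∧ x₂ 0 = 0 ∧ y 0 = 0 ∧ z 0 = 0)
    (h0' : x₁' 0 = 0 ∧ x₂' 0 = 0 ∧ y' 0 = 0 ∧ z' 0 = 0)
    (hx₁ : ∀ t ∈ Set.Icc 0 T, HasDerivAt x₁ (-Real.sinh (θ t)) t)
    (hx₂ : ∀ t ∈ Set.Icc 0 T, HasDerivAt x₂ (Real.cosh (θ t)) t)
    (hy : ∀ t ∈ Set.Icc 0 T,
      HasDerivAt y ((x₂ t * Real.sinh (θ t) + x₁ t * Real.cosh (θ t)) / 2) t)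
    (hz : ∀ t ∈ Set.Icc 0 T,
      HasDerivAt z ((x₁ t ^ 2 + x₂ t ^ 2) / 2 * Real.cosh (θ t)) t)
    (hx₁' : ∀ t ∈ Set.Icc 0 T, HasDerivAt x₁' (-Real.sinh (θ (T - t))) t)
    (hx₂' : ∀ t ∈ Set.Icc 0 T, HasDerivAt x₂' (Real.cosh (θ (T - t))) t)
    (hy' : ∀ t ∈ Set.Icc 0 T,
      HasDerivAt y' ((x₂' t * Real.sinh (θ (T - t)) + x₁' t * Real.cosh (θ (T - t))) / 2) t)
    (hz' : ∀ t ∈ Set.Icc 0 T,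
      HasDerivAt z' ((x₁' t ^ 2 + x₂' t ^ 2) / 2 * Real.cosh (θ (T - t))) t) :
    x₁' T = x₁ T ∧ x₂' T = x₂ T ∧ y' T = -y T ∧ z' T = z T - x₁ T * y T := by
  obtain ⟨h01, h02, h0y, h0z⟩ := h0
  obtain ⟨h01', h02', h0y', h0z'⟩ := h0'
  have hTmem : T ∈ Set.Icc 0 T := ⟨le_of_lt hT, le_refl T⟩
  have h0mem : (0 : ℝ) ∈ Set.Icc 0 T := ⟨le_refl 0, le_of_lt hT⟩
  -- reflected derivatives
  have rx₁ := aux_refl hx₁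
  have rx₂ := aux_refl hx₂
  have ry := aux_refl hy
  have rz := aux_refl hz
  -- Step 1 : x₁' t = x₁ T - x₁ (T - t)
  have hX1 : ∀ t ∈ Set.Icc 0 T, x₁' t = x₁ T - x₁ (T - t) := by
    have key := aux_const (F := fun t => x₁' t + x₁ (T - t)) (fun t ht => by
      have h := (hx₁' t ht).add (rx₁ t ht)
      exact h.congr_deriv (by ring))
    intro t ht
    have h1 := key t ht
    simp only [sub_zero, h01', sub_self, zero_add] at h1
    linarith [h1]
  have hX2 : ∀ t ∈ Set.Icc 0 T, x₂' t = x₂ T - x₂ (T - t) := by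
    have key := aux_const (F := fun t => x₂' t + x₂ (T - t)) (fun t ht => by
      have h := (hx₂' t ht).add (rx₂ t ht)
      exact h.congr_deriv (by ring))
    intro t ht
    have h1 := key t ht
    simp only [sub_zero, h02', sub_self, zero_add] at h1
    linarith [h1]
  refine ⟨by simpa [h01, sub_zero] using hX1 T hTmem,
          by simpa [h02, sub_zero] using hX2 T hTmem, ?_, ?_⟩
  -- Step 2 : y
  · have key := aux_const (F := fun t =>
      y' t - y (T - t) - (x₂ T * x₁ (T - t) - x₁ T * x₂ (T - t)) / 2) (fun t ht => by
      have hy't := hy' t ht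
      rw [hX1 t ht, hX2 t ht] at hy't
      have hcomb := (((rx₁ t ht).const_mul (x₂ T)).sub
        ((rx₂ t ht).const_mul (x₁ T))).div_const 2
      have h := (hy't.sub (ry t ht)).sub hcomb
      exact h.congr_deriv (by ring))
    have hT' := key T hTmem
    simp only [sub_zero, sub_self, h0y, h01, h02, h0y'] at hT'
    -- hT' : y' T - 0 - (x₂ T * 0 - x₁ T * 0)/2 = 0 - y T - (x₂ T * x₁ T - x₁ T * x₂ T)/2
    linarith [hT']
  -- Step 3 : z
  · have key := aux_const (F := fun t =>
      z' t + z (T - t) + (x₁ T ^ 2 + x₂ T ^ 2) / 2 * x₂ (T - t)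
        - x₂ T * (x₂ (T - t)) ^ 2 / 2
        - x₁ T * (y (T - t) + x₁ (T - t) * x₂ (T - t) / 2)) (fun t ht => by
      have hz't := hz' t ht
      rw [hX1 t ht, hX2 t ht] at hz't
      have hsq : HasDerivAt (fun t => (x₂ (T - t)) ^ 2)
          (2 * (x₂ (T - t)) ^ 1 * -Real.cosh (θ (T - t))) t := (rx₂ t ht).pow 2
      have hcomb := ((ry t ht).add (((rx₁ t ht).mul (rx₂ t ht)).div_const 2)).const_mul (x₁ T)
      have h := ((((hz't.add (rz t ht)).add
        ((rx₂ t ht).const_mul ((x₁ T ^ 2 + x₂ T ^ 2) / 2))).sub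
        ((hsq.const_mul (x₂ T)).div_const 2)).sub hcomb)
      refine h.congr_deriv ?_
      have := Real.cosh_sq (θ (T - t))
      ring)
    have hT' := key T hTmem
    simp only [sub_zero, sub_self, h0z, h01, h02, h0y, h0z'] at hT'
    ring_nf at hT' ⊢
    linarith [hT']
end
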